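/- arXiv:1203.0683 — 6 statements merged into one kernel-verified Lean document; each statement's English description precedes it below -/
import Mathlib

section
/- Under the same document topic model, for any vector η in R^d, the matrix Triples(η) with entries Triples(η)_{i,j} = Σ_x η_x Pr[x1=e_i, x2=e_j, x3=e_x] satisfies Triples(η) = M diag(M^T η) diag(w) M^T. -/
open MeasureTheory

/-- In the bag-of-words document topic model, for any `η ∈ ℝ^d`,
the matrix `Triples(η)` with entries `Triples(η)_{i,j} = Σ_x η_x Pr[x1=e_i, x2=e_j, x3=e_x]`
satisfies `Triples(η) = M diag(Mᵀ η) diag(w) Mᵀ`. -/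
theorem stmt_1 {d k : ℕ} {Ω : Type*} [MeasurableSpace Ω]
    (μ : Measure Ω) [IsProbabilityMeasure μ]
    (h : Ω → Fin k) (x1 x2 x3 : Ω → Fin d)
    (hmh : Measurable h) (hm1 : Measurable x1) (hm2 : Measurable x2)
    (hm3 : Measurable x3)
    (w : Fin k → ℝ) (M : Matrix (Fin d) (Fin k) ℝ)
    (hw : ∀ j, (μ {ω | h ω = j}).toReal = w j)
    (hx1 : ∀ i j, (μ {ω | x1 ω = i ∧ h ω = j}).toReal = M i j * w j)
    (hx2 : ∀ i j, (μ {ω | x2 ω = i ∧ h ω = j}).toReal = M i j * w j)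
    (hx3 : ∀ i j, (μ {ω | x3 ω = i ∧ h ω = j}).toReal = M i j * w j)
    (hci : ∀ i i' i'' j,
      (μ {ω | x1 ω = i ∧ x2 ω = i' ∧ x3 ω = i'' ∧ h ω = j}).toReal * (w j) ^ 2
        = (μ {ω | x1 ω = i ∧ h ω = j}).toReal * (μ {ω | x2 ω = i' ∧ h ω = j}).toReal
            * (μ {ω | x3 ω = i'' ∧ h ω = j}).toReal)
    (η : Fin d → ℝ) :
    Matrix.of (fun i j => ∑ a : Fin d,
        η a * (μ {ω | x1 ω = i ∧ x2 ω = j ∧ x3 ω = a}).toReal)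
      = M * Matrix.diagonal (M.transpose.mulVec η) * Matrix.diagonal w * M.transpose := by
  ext i j
  have key : ∀ a : Fin d,
      (μ {ω | x1 ω = i ∧ x2 ω = j ∧ x3 ω = a}).toReal
        = ∑ t : Fin k, M i t * M j t * M a t * w t := by
    intro a
    have hset : {ω | x1 ω = i ∧ x2 ω = j ∧ x3 ω = a}
        = ⋃ t : Fin k, {ω | x1 ω = i ∧ x2 ω = j ∧ x3 ω = a ∧ h ω = t} := by
      ext ω; simp only [Set.mem_setOf_eq, Set.mem_iUnion]
      constructor
      · rintro ⟨h1, h2, h3⟩; exact ⟨h ω, h1, h2, h3, rfl⟩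
      · rintro ⟨t, h1, h2, h3, _⟩; exact ⟨h1, h2, h3⟩
    have hmeas : ∀ t : Fin k,
        MeasurableSet {ω | x1 ω = i ∧ x2 ω = j ∧ x3 ω = a ∧ h ω = t} := by
      intro t
      exact (hm1 (measurableSet_singleton i)).inter
        ((hm2 (measurableSet_singleton j)).inter
          ((hm3 (measurableSet_singleton a)).inter (hmh (measurableSet_singleton t))))
    have hdisj : Pairwise (Function.onFun Disjoint
        fun t : Fin k => {ω | x1 ω = i ∧ x2 ω = j ∧ x3 ω = a ∧ h ω = t}) := by
      intro s t hst
      refine Set.disjoint_left.mpr ?_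
      rintro ω ⟨_, _, _, hs⟩ ⟨_, _, _, ht⟩
      exact hst (hs ▸ ht ▸ rfl)
    rw [hset, measure_iUnion hdisj hmeas, tsum_fintype,
      ENNReal.toReal_sum (fun t _ => measure_ne_top μ _)]
    refine Finset.sum_congr rfl fun t _ => ?_
    by_cases hwt : w t = 0
    · have hμh : μ {ω | h ω = t} = 0 := by
        have h0 := hw t
        rw [hwt] at h0
        exact ((ENNReal.toReal_eq_zero_iff _).mp h0).resolve_right (measure_ne_top μ _)
      have hz : μ {ω | x1 ω = i ∧ x2 ω = j ∧ x3 ω = a ∧ h ω = t} = 0 :=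
        measure_mono_null (fun ω hω => hω.2.2.2) hμh
      simp [hz, hwt]
    · have h2 := hci i j a t
      rw [hx1 i t, hx2 j t, hx3 a t] at h2
      have h3 : (μ {ω | x1 ω = i ∧ x2 ω = j ∧ x3 ω = a ∧ h ω = t}).toReal * w t ^ 2
          = (M i t * M j t * M a t * w t) * w t ^ 2 := by linear_combination h2
      exact mul_right_cancel₀ (pow_ne_zero 2 hwt) h3
  simp only [Matrix.of_apply]
  simp_rw [key, Finset.mul_sum]
  rw [Finset.sum_comm]
  simp only [Matrix.mul_apply, Matrix.diagonal_apply, Matrix.transpose_apply,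
    Matrix.mulVec, dotProduct, mul_ite, mul_zero, ite_mul, zero_mul,
    Finset.sum_ite_eq, Finset.sum_ite_eq', Finset.mem_univ, if_true]
  refine Finset.sum_congr rfl fun t _ => ?_
  simp only [Finset.mul_sum, Finset.sum_mul]
  refine Finset.sum_congr rfl fun a _ => ?_
  ring
end

section
/- Assume w_j > 0 for all j and M has rank k. Let U, V be d×k matrices such that U^T M and V^T M are invertible. Then U^T Pairs V is invertible, and the observable operator B(η) := (U^T Triples(η) V)(U^T Pairs V)^{-1} satisfies B(η) = (U^T M) diag(M^T η) (U^T M)^{-1} for all η in R^d. -/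
/-- (Observable operator for the topic model.) Assume `w_j > 0` for
all `j` and `M` has rank `k`. If `U, V` are `d×k` matrices such that `Uᵀ M` and `Vᵀ M`
are invertible, then `Uᵀ Pairs V` is invertible and for all `η`,
`B(η) := (Uᵀ Triples(η) V)(Uᵀ Pairs V)⁻¹ = (Uᵀ M) diag(Mᵀ η) (Uᵀ M)⁻¹`. -/
theorem stmt_2 {d k : ℕ} (M : Matrix (Fin d) (Fin k) ℝ) (w : Fin k → ℝ)
    (hM : M.rank = k) (hw : ∀ j, 0 < w j)
    (U V : Matrix (Fin d) (Fin k) ℝ)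
    (hU : IsUnit (U.transpose * M)) (hV : IsUnit (V.transpose * M))
    (Pairs : Matrix (Fin d) (Fin d) ℝ)
    (hPairs : Pairs = M * Matrix.diagonal w * M.transpose)
    (Triples : (Fin d → ℝ) → Matrix (Fin d) (Fin d) ℝ)
    (hTriples : ∀ η, Triples η
      = M * Matrix.diagonal (M.transpose.mulVec η) * Matrix.diagonal w * M.transpose) :
    IsUnit (U.transpose * Pairs * V) ∧
    ∀ η : Fin d → ℝ,
      (U.transpose * Triples η * V) * (U.transpose * Pairs * V)⁻¹
        = (U.transpose * M) * Matrix.diagonal (M.transpose.mulVec η)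
            * (U.transpose * M)⁻¹ := by
  have hD : IsUnit (Matrix.diagonal w) := by
    rw [Matrix.isUnit_iff_isUnit_det, Matrix.det_diagonal, isUnit_iff_ne_zero]
    exact (Finset.prod_pos fun j _ => hw j).ne'
  have hMV : IsUnit ((M.transpose) * V) := by
    have : (M.transpose) * V = (V.transpose * M).transpose := by
      simp [Matrix.transpose_mul]
    rw [this, Matrix.isUnit_iff_isUnit_det, Matrix.det_transpose,
      ← Matrix.isUnit_iff_isUnit_det]
    exact hV
  have key : U.transpose * Pairs * V
      = (U.transpose * M) * Matrix.diagonal w * (M.transpose * V) := by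
    rw [hPairs]; simp only [Matrix.mul_assoc]
  have hUnit : IsUnit (U.transpose * Pairs * V) := by
    rw [key]; exact (hU.mul hD).mul hMV
  refine ⟨hUnit, fun η => ?_⟩
  have keyT : U.transpose * Triples η * V
      = (U.transpose * M) * Matrix.diagonal (M.transpose.mulVec η)
        * Matrix.diagonal w * (M.transpose * V) := by
    rw [hTriples η]; simp only [Matrix.mul_assoc]
  rw [keyT, key, Matrix.mul_inv_rev, Matrix.mul_inv_rev]
  have h1 := Matrix.mul_nonsing_inv _ ((Matrix.isUnit_iff_isUnit_det _).1 hMV)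
  have h2 := Matrix.mul_nonsing_inv _ ((Matrix.isUnit_iff_isUnit_det _).1 hD)
  calc (U.transpose * M) * Matrix.diagonal (M.transpose.mulVec η)
        * Matrix.diagonal w * (M.transpose * V)
        * ((M.transpose * V)⁻¹ * ((Matrix.diagonal w)⁻¹ * (U.transpose * M)⁻¹))
      = (U.transpose * M) * Matrix.diagonal (M.transpose.mulVec η)
        * ((Matrix.diagonal w * ((M.transpose * V) * (M.transpose * V)⁻¹))
          * (Matrix.diagonal w)⁻¹) * (U.transpose * M)⁻¹ := by simp only [Matrix.mul_assoc]
    _ = _ := by rw [h1, Matrix.mul_one, h2, Matrix.mul_one]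
end

section
/- In the multi-view mixture model, the second-order moment matrix P_{1,2} = E[x1 ⊗ x2] equals M1 diag(w) M2^T, and the third-order moment P_{1,2,3}(η) = E[(x1 ⊗ x2)⟨η, x3⟩] equals M1 diag(M3^T η) diag(w) M2^T for all η in R^d. -/
open MeasureTheory Finset
open scoped Matrix

/-!
Split the expectation over the fibres `{h = t}`. On a fibre of mass `w t > 0`, the factorisation
hypotheses divided by the appropriate power of `w t` turn the mixed moments into products of the
conditional means, `w t · M1 i t · M2 j t` (and similarly with `M3 a t`); a fibre of mass `0` is
`μ`-null, so both sides vanish there. Summing over `t` gives the matrix entries, and the third-order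
identity follows by linearity in `η`.
-/

theorem integral_eq_sum_setIntegral_fiber {Ω ι E : Type*} [MeasurableSpace Ω]
    [MeasurableSpace ι] [MeasurableSingletonClass ι] [Fintype ι]
    [NormedAddCommGroup E] [NormedSpace ℝ E] {μ : Measure Ω} {h : Ω → ι} (hh : Measurable h)
    {f : Ω → E} (hf : Integrable f μ) :
    ∫ ω, f ω ∂μ = ∑ t, ∫ ω in {ω | h ω = t}, f ω ∂μ := by
  have hcover : ⋃ t, {ω | h ω = t} = Set.univ := Set.iUnion_eq_univ_iff.mpr fun ω => ⟨h ω, rfl⟩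
  rw [← setIntegral_univ, ← hcover]
  exact integral_iUnion_fintype (fun t => hh (measurableSet_singleton t))
    (pairwise_disjoint_fiber h) fun _ => hf.integrableOn

theorem eq_mul_of_mul_pow_eq {M : Type*} [CommMonoidWithZero M] [IsCancelMulZero M]
    {a b w : M} {n : ℕ} (hw : w = 0 → a = 0) (h : a * w ^ n = w ^ (n + 1) * b) : a = w * b := by
  rcases eq_or_ne w 0 with rfl | hw0
  · rw [hw rfl, zero_mul]
  · refine mul_right_cancel₀ (pow_ne_zero n hw0) ?_
    rw [h, pow_succ]
    ac_rfl

theorem setIntegral_eq_of_mul_pow_eq {Ω : Type*} [MeasurableSpace Ω] {μ : Measure Ω}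
    [IsFiniteMeasure μ] {s : Set Ω} {F : Ω → ℝ} {w c : ℝ} {n : ℕ} (hw : μ.real s = w)
    (hF : (∫ ω in s, F ω ∂μ) * w ^ n = w ^ (n + 1) * c) : ∫ ω in s, F ω ∂μ = w * c :=
  eq_mul_of_mul_pow_eq
    (fun hw0 => setIntegral_measure_zero F ((measureReal_eq_zero_iff).mp (hw.trans hw0))) hF

theorem Matrix.mul_diagonal_mul_transpose_apply {m n α : Type*} [Fintype n] [DecidableEq n]
    [CommSemiring α] (A B : Matrix m n α) (v : n → α) (i j : m) :
    (A * diagonal v * Bᵀ) i j = ∑ t, v t * (A i t * B j t) := by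
  rw [mul_apply]
  exact sum_congr rfl fun t _ => by rw [mul_diagonal, transpose_apply]; ring

/-- In the multi-view mixture model, the second-order moment matrix
`P_{1,2} = E[x1 ⊗ x2]` equals `M1 diag(w) M2ᵀ`, and the third-order moment
`P_{1,2,3}(η) = E[(x1 ⊗ x2)⟨η, x3⟩]` equals `M1 diag(M3ᵀ η) diag(w) M2ᵀ` for all `η`. -/
theorem stmt_3 {d k : ℕ} {Ω : Type*} [MeasurableSpace Ω]
    (μ : Measure Ω) [IsProbabilityMeasure μ]
    (h : Ω → Fin k) (hmh : Measurable h)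
    (x1 x2 x3 : Ω → Fin d → ℝ)
    (w : Fin k → ℝ) (M1 M2 M3 : Matrix (Fin d) (Fin k) ℝ)
    (hw : ∀ j, (μ {ω | h ω = j}).toReal = w j)
    (hmean1 : ∀ i j, ∫ ω in {ω | h ω = j}, x1 ω i ∂μ = w j * M1 i j)
    (hmean2 : ∀ i j, ∫ ω in {ω | h ω = j}, x2 ω i ∂μ = w j * M2 i j)
    (hmean3 : ∀ i j, ∫ ω in {ω | h ω = j}, x3 ω i ∂μ = w j * M3 i j)
    (hint2 : ∀ i j, Integrable (fun ω => x1 ω i * x2 ω j) μ)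
    (hint3 : ∀ i j a, Integrable (fun ω => x1 ω i * x2 ω j * x3 ω a) μ)
    (hci2 : ∀ i j t,
      (∫ ω in {ω | h ω = t}, x1 ω i * x2 ω j ∂μ) * w t
        = (∫ ω in {ω | h ω = t}, x1 ω i ∂μ) * (∫ ω in {ω | h ω = t}, x2 ω j ∂μ))
    (hci3 : ∀ i j a t,
      (∫ ω in {ω | h ω = t}, x1 ω i * x2 ω j * x3 ω a ∂μ) * (w t) ^ 2
        = (∫ ω in {ω | h ω = t}, x1 ω i ∂μ) * (∫ ω in {ω | h ω = t}, x2 ω j ∂μ)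
            * (∫ ω in {ω | h ω = t}, x3 ω a ∂μ)) :
    Matrix.of (fun i j => ∫ ω, x1 ω i * x2 ω j ∂μ)
        = M1 * Matrix.diagonal w * M2.transpose ∧
    ∀ η : Fin d → ℝ,
      Matrix.of (fun i j => ∫ ω, x1 ω i * x2 ω j * (∑ a, η a * x3 ω a) ∂μ)
        = M1 * Matrix.diagonal (M3.transpose.mulVec η) * Matrix.diagonal w
            * M2.transpose := by
  have moment2 : ∀ i j, ∫ ω, x1 ω i * x2 ω j ∂μ = ∑ t, w t * (M1 i t * M2 j t) := fun i j => by
    refine (integral_eq_sum_setIntegral_fiber hmh (hint2 i j)).trans (sum_congr rfl fun t _ => ?_)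
    exact setIntegral_eq_of_mul_pow_eq (hw t) (n := 1)
      (by rw [pow_one, hci2, hmean1, hmean2]; ring)
  have moment3 : ∀ i j a, ∫ ω, x1 ω i * x2 ω j * x3 ω a ∂μ
      = ∑ t, w t * (M1 i t * M2 j t * M3 a t) := fun i j a => by
    refine (integral_eq_sum_setIntegral_fiber hmh (hint3 i j a)).trans
      (sum_congr rfl fun t _ => ?_)
    exact setIntegral_eq_of_mul_pow_eq (hw t) (n := 2)
      (by rw [hci3, hmean1, hmean2, hmean3]; ring)
  refine ⟨?_, fun η => ?_⟩
  · ext i j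
    rw [Matrix.of_apply, moment2, Matrix.mul_diagonal_mul_transpose_apply]
  · ext i j
    have hlin : ∫ ω, x1 ω i * x2 ω j * ∑ a, η a * x3 ω a ∂μ
        = ∑ a, η a * ∫ ω, x1 ω i * x2 ω j * x3 ω a ∂μ := by
      simp_rw [← integral_const_mul, mul_sum]
      rw [← integral_finsetSum _ fun a _ => (hint3 i j a).const_mul (η a)]
      exact integral_congr_ae (.of_forall fun ω => sum_congr rfl fun a _ => by ring)
    rw [Matrix.of_apply, hlin, Matrix.mul_assoc M1, Matrix.diagonal_mul_diagonal,
      Matrix.mul_diagonal_mul_transpose_apply]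
    simp only [moment3, Matrix.mulVec, dotProduct, Matrix.transpose_apply, mul_sum, sum_mul]
    rw [sum_comm]
    exact sum_congr rfl fun t _ => sum_congr rfl fun a _ => by ring
end

section
/- Assume w_j>0 for all j and each M_v has rank k. For v in {1,2,3}, let U_v be a d×k matrix with U_v^T M_v invertible. Then U_1^T P_{1,2} U_2 is invertible, and B_{1,2,3}(η) := (U_1^T P_{1,2,3}(η) U_2)(U_1^T P_{1,2} U_2)^{-1} equals (U_1^T M_1) diag(M_3^T η) (U_1^T M_1)^{-1}; in particular the k roots of the characteristic polynomial of B_{1,2,3}(η) are {⟨η, μ_{3,j}⟩ : j in [k]}. -/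
/-! Both `U₁ᵀ P₁₂ U₂` and `U₁ᵀ P₁₂₃(η) U₂` end in the same invertible factor
`diag(w) (M₂ᵀ U₂)`, which therefore cancels in `B₁₂₃(η)`, leaving the conjugate of
`diag(M₃ᵀ η)` by `U₁ᵀ M₁`; conjugation preserves the characteristic polynomial. -/

open Polynomial

namespace Matrix

variable {n R : Type*} [Fintype n] [DecidableEq n] [CommRing R]

theorem mul_mul_inv_of_isUnit_right (X Z Y : Matrix n n R) (hY : IsUnit Y) :
    X * Y * (Z * Y)⁻¹ = X * Z⁻¹ := by
  rw [mul_inv_rev, ← Matrix.mul_assoc,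
    mul_nonsing_inv_cancel_right _ _ ((isUnit_iff_isUnit_det Y).mp hY)]

theorem charpoly_conj_of_isUnit {A : Matrix n n R} (hA : IsUnit A) (N : Matrix n n R) :
    (A * N * A⁻¹).charpoly = N.charpoly := by
  simpa using charpoly_units_conj hA.unit N

end Matrix

theorem stmt_4_general {d k : ℕ} (M1 M2 M3 : Matrix (Fin d) (Fin k) ℝ) (w : Fin k → ℝ)
    (hw : ∀ j, 0 < w j)
    (U1 U2 : Matrix (Fin d) (Fin k) ℝ)
    (hU1 : IsUnit (U1.transpose * M1)) (hU2 : IsUnit (U2.transpose * M2))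
    (P12 : Matrix (Fin d) (Fin d) ℝ)
    (hP12 : P12 = M1 * Matrix.diagonal w * M2.transpose)
    (P123 : (Fin d → ℝ) → Matrix (Fin d) (Fin d) ℝ)
    (hP123 : ∀ η, P123 η
      = M1 * Matrix.diagonal (M3.transpose.mulVec η) * Matrix.diagonal w * M2.transpose) :
    IsUnit (U1.transpose * P12 * U2) ∧
    ∀ η : Fin d → ℝ,
      (U1.transpose * P123 η * U2) * (U1.transpose * P12 * U2)⁻¹
        = (U1.transpose * M1) * Matrix.diagonal (M3.transpose.mulVec η)
            * (U1.transpose * M1)⁻¹ ∧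
      ((U1.transpose * P123 η * U2) * (U1.transpose * P12 * U2)⁻¹).charpoly
        = ∏ j : Fin k, (X - C (∑ i, η i * M3 i j)) := by
  have hW : IsUnit (Matrix.diagonal w * (M2.transpose * U2)) := by
    refine (Matrix.isUnit_diagonal.mpr (Pi.isUnit_iff.mpr fun j => (hw j).ne'.isUnit)).mul ?_
    simpa only [Matrix.transpose_mul, Matrix.transpose_transpose] using
      (Matrix.isUnit_transpose _).mpr hU2
  have hP12_eq : U1.transpose * P12 * U2
      = U1.transpose * M1 * (Matrix.diagonal w * (M2.transpose * U2)) := by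
    simp only [hP12, Matrix.mul_assoc]
  have hB (η : Fin d → ℝ) : U1.transpose * P123 η * U2 * (U1.transpose * P12 * U2)⁻¹
      = U1.transpose * M1 * Matrix.diagonal (M3.transpose.mulVec η)
        * (U1.transpose * M1)⁻¹ := by
    have hP123_eq : U1.transpose * P123 η * U2
        = U1.transpose * M1 * Matrix.diagonal (M3.transpose.mulVec η)
          * (Matrix.diagonal w * (M2.transpose * U2)) := by
      simp only [hP123, Matrix.mul_assoc]
    rw [hP123_eq, hP12_eq, Matrix.mul_mul_inv_of_isUnit_right _ _ _ hW, Matrix.mul_assoc]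
  refine ⟨hP12_eq ▸ hU1.mul hW, fun η => ⟨hB η, ?_⟩⟩
  rw [hB, Matrix.charpoly_conj_of_isUnit hU1, Matrix.charpoly_diagonal]
  simp [Matrix.mulVec_transpose, Matrix.vecMul, dotProduct]

/-- (Observable operator, general multi-view setting.) Assume `w_j > 0`
for all `j` and each `M_v` has rank `k`. For `U_v` with `U_vᵀ M_v` invertible,
`U_1ᵀ P_{1,2} U_2` is invertible, the operator
`B_{1,2,3}(η) := (U_1ᵀ P_{1,2,3}(η) U_2)(U_1ᵀ P_{1,2} U_2)⁻¹` equals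
`(U_1ᵀ M_1) diag(M_3ᵀ η) (U_1ᵀ M_1)⁻¹`, and the `k` roots of its characteristic
polynomial are `⟨η, μ_{3,j}⟩` for `j ∈ [k]`. -/
theorem stmt_4 {d k : ℕ} (M1 M2 M3 : Matrix (Fin d) (Fin k) ℝ) (w : Fin k → ℝ)
    (hM1 : M1.rank = k) (hM2 : M2.rank = k) (hM3 : M3.rank = k)
    (hw : ∀ j, 0 < w j)
    (U1 U2 U3 : Matrix (Fin d) (Fin k) ℝ)
    (hU1 : IsUnit (U1.transpose * M1)) (hU2 : IsUnit (U2.transpose * M2))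
    (hU3 : IsUnit (U3.transpose * M3))
    (P12 : Matrix (Fin d) (Fin d) ℝ)
    (hP12 : P12 = M1 * Matrix.diagonal w * M2.transpose)
    (P123 : (Fin d → ℝ) → Matrix (Fin d) (Fin d) ℝ)
    (hP123 : ∀ η, P123 η
      = M1 * Matrix.diagonal (M3.transpose.mulVec η) * Matrix.diagonal w * M2.transpose) :
    IsUnit (U1.transpose * P12 * U2) ∧
    ∀ η : Fin d → ℝ,
      (U1.transpose * P123 η * U2) * (U1.transpose * P12 * U2)⁻¹
        = (U1.transpose * M1) * Matrix.diagonal (M3.transpose.mulVec η)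
            * (U1.transpose * M1)⁻¹ ∧
      ((U1.transpose * P123 η * U2) * (U1.transpose * P12 * U2)⁻¹).charpoly
        = ∏ j : Fin k, (X - C (∑ i, η i * M3 i j)) :=
  stmt_4_general M1 M2 M3 w hw U1 U2 hU1 hU2 P12 hP12 P123 hP123
end

section
/- In the multi-view Gaussian mixture model with block-diagonal covariances, the matrix F_{1,2,3}(φ,ψ) := (U_1^T Q_{1,2,3}(φ,ψ) U_2)(U_1^T P_{1,2} U_2)^{-1}, where Q_{1,2,3}(φ,ψ) := E[(x1 ⊗ x2)⟨φ,x3⟩⟨ψ,x3⟩], satisfies F_{1,2,3}(φ,ψ) = (U_1^T M_1) diag(⟨φ,μ_{3,t}⟩⟨ψ,μ_{3,t}⟩ + ⟨φ, Σ_{3,t} ψ⟩ : t ∈ [k]) (U_1^T M_1)^{-1}. -/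
open MeasureTheory

/-- (Multi-view Gaussian mixture, fourth-order operator.) With
`Q_{1,2,3}(φ,ψ) := E[(x1 ⊗ x2)⟨φ,x3⟩⟨ψ,x3⟩]` and `E[x3 ⊗ x3 | h=t] = μ_{3,t} ⊗ μ_{3,t} + Σ_{3,t}`,
the matrix `F_{1,2,3}(φ,ψ) := (U_1ᵀ Q_{1,2,3}(φ,ψ) U_2)(U_1ᵀ P_{1,2} U_2)⁻¹` equals
`(U_1ᵀ M_1) diag(⟨φ,μ_{3,t}⟩⟨ψ,μ_{3,t}⟩ + ⟨φ, Σ_{3,t} ψ⟩ : t ∈ [k]) (U_1ᵀ M_1)⁻¹`. -/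
theorem stmt_6 {d k : ℕ} {Ω : Type*} [MeasurableSpace Ω]
    (μ : Measure Ω) [IsProbabilityMeasure μ]
    (h : Ω → Fin k) (hmh : Measurable h)
    (x1 x2 x3 : Ω → Fin d → ℝ)
    (w : Fin k → ℝ) (hw0 : ∀ j, 0 < w j)
    (M1 M2 M3 : Matrix (Fin d) (Fin k) ℝ)
    (Sig3 : Fin k → Matrix (Fin d) (Fin d) ℝ)
    (φ ψ : Fin d → ℝ)
    (hw : ∀ j, (μ {ω | h ω = j}).toReal = w j)
    (hM1rank : M1.rank = k) (hM2rank : M2.rank = k) (hM3rank : M3.rank = k)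
    (hmean1 : ∀ i j, ∫ ω in {ω | h ω = j}, x1 ω i ∂μ = w j * M1 i j)
    (hmean2 : ∀ i j, ∫ ω in {ω | h ω = j}, x2 ω i ∂μ = w j * M2 i j)
    (hx3sq : ∀ t, ∫ ω in {ω | h ω = t},
        (∑ a, φ a * x3 ω a) * (∑ b, ψ b * x3 ω b) ∂μ
      = w t * ((∑ a, φ a * M3 a t) * (∑ b, ψ b * M3 b t)
          + ∑ a, ∑ b, φ a * Sig3 t a b * ψ b))
    (hint : ∀ i j, Integrable
      (fun ω => x1 ω i * x2 ω j * (∑ a, φ a * x3 ω a) * (∑ b, ψ b * x3 ω b)) μ)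
    (hci : ∀ i j t,
      (∫ ω in {ω | h ω = t},
          x1 ω i * x2 ω j * (∑ a, φ a * x3 ω a) * (∑ b, ψ b * x3 ω b) ∂μ) * (w t) ^ 2
        = (∫ ω in {ω | h ω = t}, x1 ω i ∂μ) * (∫ ω in {ω | h ω = t}, x2 ω j ∂μ)
            * (∫ ω in {ω | h ω = t}, (∑ a, φ a * x3 ω a) * (∑ b, ψ b * x3 ω b) ∂μ))
    (U1 U2 : Matrix (Fin d) (Fin k) ℝ)
    (hU1 : IsUnit (U1.transpose * M1)) (hU2 : IsUnit (U2.transpose * M2))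
    (P12 : Matrix (Fin d) (Fin d) ℝ)
    (hP12 : P12 = M1 * Matrix.diagonal w * M2.transpose)
    (Q : Matrix (Fin d) (Fin d) ℝ)
    (hQ : Q = Matrix.of fun i j =>
      ∫ ω, x1 ω i * x2 ω j * (∑ a, φ a * x3 ω a) * (∑ b, ψ b * x3 ω b) ∂μ) :
    (U1.transpose * Q * U2) * (U1.transpose * P12 * U2)⁻¹
      = (U1.transpose * M1)
          * Matrix.diagonal (fun t => (∑ a, φ a * M3 a t) * (∑ b, ψ b * M3 b t)
              + ∑ a, ∑ b, φ a * Sig3 t a b * ψ b)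
          * (U1.transpose * M1)⁻¹ := by
  classical
  set lam : Fin k → ℝ := fun t => (∑ a, φ a * M3 a t) * (∑ b, ψ b * M3 b t)
      + ∑ a, ∑ b, φ a * Sig3 t a b * ψ b with hlam
  -- per-fiber integral value
  have hfib : ∀ i j t, (∫ ω in {ω | h ω = t},
      x1 ω i * x2 ω j * (∑ a, φ a * x3 ω a) * (∑ b, ψ b * x3 ω b) ∂μ)
      = w t * lam t * M1 i t * M2 j t := by
    intro i j t
    have hwne : w t ≠ 0 := (hw0 t).ne'
    have := hci i j t
    rw [hmean1, hmean2, hx3sq] at this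
    have h2 : (∫ ω in {ω | h ω = t},
        x1 ω i * x2 ω j * (∑ a, φ a * x3 ω a) * (∑ b, ψ b * x3 ω b) ∂μ) * (w t) ^ 2
        = (w t * lam t * M1 i t * M2 j t) * (w t) ^ 2 := by
      rw [this, hlam]; ring
    exact mul_right_cancel₀ (pow_ne_zero 2 hwne) h2
  -- decompose the full integral into fibers
  have hQval : Q = M1 * Matrix.diagonal (fun t => w t * lam t) * M2.transpose := by
    rw [hQ]
    ext i j
    have hcov : (⋃ t ∈ (Finset.univ : Finset (Fin k)), {ω | h ω = t}) = Set.univ := by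
      ext ω; simp
    have hsplit : (∫ ω, x1 ω i * x2 ω j * (∑ a, φ a * x3 ω a) * (∑ b, ψ b * x3 ω b) ∂μ)
        = ∑ t, ∫ ω in {ω | h ω = t},
            x1 ω i * x2 ω j * (∑ a, φ a * x3 ω a) * (∑ b, ψ b * x3 ω b) ∂μ := by
      rw [← setIntegral_univ, ← hcov]
      refine integral_biUnion_finset _ (fun t _ => hmh (measurableSet_singleton t))
        ?_ (fun t _ => (hint i j).integrableOn)
      intro a _ b _ hab
      simp only [Function.onFun]
      exact Set.disjoint_left.2 fun ω (ha : h ω = a) (hb : h ω = b) => hab (ha.symm.trans hb)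
    simp only [Matrix.of_apply, Matrix.mul_apply, Matrix.diagonal_apply,
      Matrix.transpose_apply, mul_ite, mul_zero, ite_mul, zero_mul,
      Finset.sum_ite_eq', Finset.mem_univ, if_true]
    rw [hsplit]
    refine Finset.sum_congr rfl fun t _ => ?_
    rw [hfib i j t]; ring
  -- matrix algebra
  set A := U1.transpose * M1 with hA
  set C := M2.transpose * U2 with hC
  set D := Matrix.diagonal w with hD
  have hDunit : IsUnit D := by
    rw [Matrix.isUnit_iff_isUnit_det, hD, Matrix.det_diagonal]
    exact isUnit_iff_ne_zero.2 (Finset.prod_ne_zero_iff.2 fun t _ => (hw0 t).ne')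
  have hCunit : IsUnit C := by
    rw [Matrix.isUnit_iff_isUnit_det]
    have := hU2
    rw [Matrix.isUnit_iff_isUnit_det] at this
    have hdet : C.det = (U2.transpose * M2).det := by
      rw [hC, ← Matrix.det_transpose, Matrix.transpose_mul, Matrix.transpose_transpose]
    rwa [hdet]
  have hB : IsUnit (D * C) := hDunit.mul hCunit
  have hAB : IsUnit (A * (D * C)) := hU1.mul hB
  have hrw1 : U1.transpose * Q * U2 = A * Matrix.diagonal lam * (D * C) := by
    rw [hQval, hA, hC, hD]
    have hdd : Matrix.diagonal (fun t => w t * lam t) = Matrix.diagonal lam * Matrix.diagonal w := by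
      have hfun : (fun t => w t * lam t) = fun t => lam t * w t := funext fun t => mul_comm _ _
      rw [hfun, ← Matrix.diagonal_mul_diagonal]
    rw [hdd]; simp only [Matrix.mul_assoc]
  have hrw2 : U1.transpose * P12 * U2 = A * (D * C) := by
    rw [hP12, hA, hC, hD]; simp only [Matrix.mul_assoc]
  rw [hrw1, hrw2, Matrix.mul_inv_rev]
  have hBB : (D * C) * (D * C)⁻¹ = 1 :=
    Matrix.mul_nonsing_inv _ ((Matrix.isUnit_iff_isUnit_det _).1 hB)
  calc A * Matrix.diagonal lam * (D * C) * ((D * C)⁻¹ * A⁻¹)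
      = A * Matrix.diagonal lam * ((D * C) * (D * C)⁻¹) * A⁻¹ := by
        simp only [Matrix.mul_assoc]
    _ = A * Matrix.diagonal lam * A⁻¹ := by rw [hBB, Matrix.mul_one]
end

section
/- Let X be a rank-k m×n real matrix with top-k left/right singular subspaces spanned by U and V (orthonormal columns), and let X̂ be another matrix with corresponding matrices Û, V̂. With ε0 := ‖X̂ − X‖₂/σ_k(X) < 1/2 and ε1 := ε0/(1−ε0), we have: σ_k(X̂) ≥ (1−ε0)σ_k(X) > 0, σ_k(Û^T U) ≥ √(1−ε1²), σ_k(V̂^T V) ≥ √(1−ε1²), and σ_k(Û^T X V̂) ≥ (1−ε1²)σ_k(X). -/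
/-!
Since `σ_k` is a max–min over `k`-dimensional subspaces, Weyl's inequality
`σ_k(X̂) ≥ σ_k(X) - ‖X̂ - X‖₂` gives the first bound. Every vector `Û w` equals `X̂ v` with
`‖v‖ ≤ ‖w‖ / σ_k(X̂)`, and the column space of `U` contains that of `X`; so the component of
`Û w` orthogonal to it is that of `(X̂ - X) v`, of length at most `ε₁ ‖w‖` (Wedin's `sin Θ`
bound). By Pythagoras `Uᵀ Û` is then bounded below by `√(1 - ε₁²)`, and so is its transpose,
being square. Finally `Ûᵀ X V̂ = (Ûᵀ U) (Uᵀ X V) (Vᵀ V̂)` is a product of three square matrices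
bounded below by `√(1 - ε₁²)`, `σ_k(X)` and `√(1 - ε₁²)`.
-/

/-- Euclidean norm of a vector in `ℝ^n`. -/
noncomputable def vnorm {n : ℕ} (v : Fin n → ℝ) : ℝ := Real.sqrt (∑ i, v i ^ 2)

/-- The `j`-th largest singular value (1-indexed) of a real `m × n` matrix, via the
Courant–Fischer max-min characterization.  In particular `sval A 1` is the spectral
norm `‖A‖₂` and `sval A k` is `σ_k(A)`. -/
noncomputable def sval {m n : ℕ} (A : Matrix (Fin m) (Fin n) ℝ) (j : ℕ) : ℝ :=
  sSup {c : ℝ | 0 ≤ c ∧ ∃ W : Submodule ℝ (Fin n → ℝ), Module.finrank ℝ W = j ∧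
    ∀ v ∈ W, c * vnorm v ≤ vnorm (A.mulVec v)}

/-- `U` is an `m × k` matrix of orthonormal columns spanning a top-`k` left singular
subspace of `A`: its columns are orthonormal eigenvectors of `A Aᵀ` whose eigenvalues
are (at least) `σ_k(A)²`, i.e. belong to the `k` largest. -/
def IsTopSingular {m n k : ℕ} (A : Matrix (Fin m) (Fin n) ℝ)
    (U : Matrix (Fin m) (Fin k) ℝ) : Prop :=
  U.transpose * U = 1 ∧ ∃ D : Fin k → ℝ,
    A * A.transpose * U = U * Matrix.diagonal D ∧ ∀ j, sval A k ^ 2 ≤ D j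

open Matrix

section vnorm
variable {n : ℕ}

lemma vnorm_eq_norm (v : Fin n → ℝ) :
    vnorm v = ‖(WithLp.toLp 2 v : EuclideanSpace ℝ (Fin n))‖ := by
  simp [vnorm, EuclideanSpace.norm_eq]

lemma vnorm_nonneg (v : Fin n → ℝ) : 0 ≤ vnorm v := Real.sqrt_nonneg _

lemma vnorm_zero : vnorm (0 : Fin n → ℝ) = 0 := by simp [vnorm]

lemma vnorm_sq_eq_sum (v : Fin n → ℝ) : vnorm v ^ 2 = ∑ i, v i ^ 2 :=
  Real.sq_sqrt (Finset.sum_nonneg fun i _ => sq_nonneg (v i))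

lemma vnorm_sq (v : Fin n → ℝ) : vnorm v ^ 2 = v ⬝ᵥ v := by
  rw [vnorm_eq_norm, ← real_inner_self_eq_norm_sq, EuclideanSpace.inner_toLp_toLp]; rfl

lemma vnorm_pos {v : Fin n → ℝ} (hv : v ≠ 0) : 0 < vnorm v := by
  rw [vnorm_eq_norm]; simpa using hv

lemma vnorm_smul (t : ℝ) (v : Fin n → ℝ) : vnorm (t • v) = |t| * vnorm v := by
  simp [vnorm_eq_norm, WithLp.toLp_smul, norm_smul]

lemma vnorm_sub_le (x y : Fin n → ℝ) : vnorm (x - y) ≤ vnorm x + vnorm y := by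
  simpa [vnorm_eq_norm, WithLp.toLp_sub] using norm_sub_le (WithLp.toLp 2 x) (WithLp.toLp 2 y)

lemma dotProduct_le_vnorm_mul (x y : Fin n → ℝ) : x ⬝ᵥ y ≤ vnorm x * vnorm y := by
  simpa [vnorm_eq_norm, EuclideanSpace.inner_toLp_toLp, dotProduct_comm]
    using real_inner_le_norm (WithLp.toLp 2 x : EuclideanSpace ℝ (Fin n)) (WithLp.toLp 2 y)

end vnorm

section sval
variable {m n k : ℕ}

lemma exists_vnorm_mulVec_le (A : Matrix (Fin m) (Fin n) ℝ) :
    ∃ C, ∀ v, vnorm (A *ᵥ v) ≤ C * vnorm v := by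
  let f := LinearMap.toContinuousLinearMap (Matrix.toLpLin 2 2 A :
    EuclideanSpace ℝ (Fin n) →ₗ[ℝ] EuclideanSpace ℝ (Fin m))
  exact ⟨‖f‖, fun v => by simpa [vnorm_eq_norm, f] using f.le_opNorm (WithLp.toLp 2 v)⟩

lemma sval_nonneg (A : Matrix (Fin m) (Fin n) ℝ) (j : ℕ) : 0 ≤ sval A j :=
  Real.sSup_nonneg fun _ hc => hc.1

lemma le_sval {A : Matrix (Fin m) (Fin n) ℝ} {j : ℕ} (hj : 0 < j) {c : ℝ} (hc : 0 ≤ c)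
    (W : Submodule ℝ (Fin n → ℝ)) (hW : Module.finrank ℝ W = j)
    (h : ∀ v ∈ W, c * vnorm v ≤ vnorm (A *ᵥ v)) : c ≤ sval A j := by
  refine le_csSup ?_ ⟨hc, W, hW, h⟩
  obtain ⟨C, hC⟩ := exists_vnorm_mulVec_le A
  refine ⟨C, ?_⟩
  rintro c' ⟨-, W', hW', h'⟩
  obtain ⟨v, hvW, hv⟩ := Submodule.exists_mem_ne_zero_of_ne_bot
    (Submodule.one_le_finrank_iff.mp (hW' ▸ hj))
  exact le_of_mul_le_mul_right ((h' v hvW).trans (hC v)) (vnorm_pos hv)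

lemma sval_le {A : Matrix (Fin m) (Fin n) ℝ} {j : ℕ} {b : ℝ} (hb : 0 ≤ b)
    (h : ∀ c, 0 ≤ c → ∀ W : Submodule ℝ (Fin n → ℝ), Module.finrank ℝ W = j →
      (∀ v ∈ W, c * vnorm v ≤ vnorm (A *ᵥ v)) → c ≤ b) : sval A j ≤ b := by
  rcases Set.eq_empty_or_nonempty {c : ℝ | 0 ≤ c ∧ ∃ W : Submodule ℝ (Fin n → ℝ),
      Module.finrank ℝ W = j ∧ ∀ v ∈ W, c * vnorm v ≤ vnorm (A *ᵥ v)} with he | hne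
  · rw [sval, he, Real.sSup_empty]; exact hb
  · exact csSup_le hne fun c ⟨hc, W, hW, hcW⟩ => h c hc W hW hcW

lemma vnorm_mulVec_le_sval_one (A : Matrix (Fin m) (Fin n) ℝ) (v : Fin n → ℝ) :
    vnorm (A *ᵥ v) ≤ sval A 1 * vnorm v := by
  rcases eq_or_ne v 0 with rfl | hv
  · simp [vnorm_zero]
  have hvpos := vnorm_pos hv
  rw [← div_le_iff₀ hvpos]
  refine le_sval one_pos (div_nonneg (vnorm_nonneg _) hvpos.le) (Submodule.span ℝ {v})
    (finrank_span_singleton hv) fun w hw => ?_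
  obtain ⟨t, rfl⟩ := Submodule.mem_span_singleton.mp hw
  rw [mulVec_smul, vnorm_smul, vnorm_smul, div_mul_eq_mul_div, div_le_iff₀ hvpos]
  nlinarith [vnorm_nonneg (A *ᵥ v), abs_nonneg t]

lemma sval_one_le {A : Matrix (Fin m) (Fin n) ℝ} {b : ℝ} (hb : 0 ≤ b)
    (h : ∀ v, vnorm (A *ᵥ v) ≤ b * vnorm v) : sval A 1 ≤ b := by
  refine sval_le hb fun c _ W hW hcW => ?_
  obtain ⟨v, hvW, hv⟩ := Submodule.exists_mem_ne_zero_of_ne_bot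
    (Submodule.one_le_finrank_iff.mp hW.ge)
  exact le_of_mul_le_mul_right ((hcW v hvW).trans (h v)) (vnorm_pos hv)

lemma vnorm_transpose_mulVec_le_sval_one (A : Matrix (Fin m) (Fin n) ℝ) (v : Fin m → ℝ) :
    vnorm (Aᵀ *ᵥ v) ≤ sval A 1 * vnorm v := by
  rcases (vnorm_nonneg (Aᵀ *ᵥ v)).eq_or_lt with h0 | hpos
  · rw [← h0]; exact mul_nonneg (sval_nonneg A 1) (vnorm_nonneg v)
  refine le_of_mul_le_mul_right ?_ hpos
  calc vnorm (Aᵀ *ᵥ v) * vnorm (Aᵀ *ᵥ v) = v ⬝ᵥ A *ᵥ (Aᵀ *ᵥ v) := by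
        rw [← sq, vnorm_sq, dotProduct_mulVec, vecMul_transpose, dotProduct_comm]
    _ ≤ vnorm v * vnorm (A *ᵥ (Aᵀ *ᵥ v)) := dotProduct_le_vnorm_mul _ _
    _ ≤ vnorm v * (sval A 1 * vnorm (Aᵀ *ᵥ v)) :=
        mul_le_mul_of_nonneg_left (vnorm_mulVec_le_sval_one A _) (vnorm_nonneg v)
    _ = sval A 1 * vnorm v * vnorm (Aᵀ *ᵥ v) := by ring

lemma sval_transpose_one (A : Matrix (Fin m) (Fin n) ℝ) : sval Aᵀ 1 = sval A 1 := by
  refine le_antisymm (sval_one_le (sval_nonneg A 1) (vnorm_transpose_mulVec_le_sval_one A))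
    (sval_one_le (sval_nonneg Aᵀ 1) fun v => ?_)
  simpa using vnorm_transpose_mulVec_le_sval_one Aᵀ v

lemma sval_sub_sval_one_le (hk : 0 < k) (A B : Matrix (Fin m) (Fin n) ℝ) :
    sval A k - sval (B - A) 1 ≤ sval B k := by
  rw [sub_le_iff_le_add]
  refine sval_le (add_nonneg (sval_nonneg B k) (sval_nonneg _ 1)) fun c hc W hW hcW => ?_
  rcases le_total c (sval (B - A) 1) with hce | hce
  · linarith [sval_nonneg B k]
  rw [← sub_le_iff_le_add]
  refine le_sval hk (sub_nonneg.mpr hce) W hW fun v hv => ?_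
  have hAB : A *ᵥ v = B *ᵥ v - (B - A) *ᵥ v := by rw [sub_mulVec]; abel
  have := hcW v hv
  rw [hAB] at this
  nlinarith [vnorm_sub_le (B *ᵥ v) ((B - A) *ᵥ v), vnorm_mulVec_le_sval_one (B - A) v]

end sval

section rank
variable {m n : ℕ}

lemma sval_rank_pos {X : Matrix (Fin m) (Fin n) ℝ} (h : 0 < X.rank) : 0 < sval X X.rank := by
  obtain ⟨W, hW⟩ := Submodule.exists_isCompl (LinearMap.ker X.mulVecLin)
  have hWrank : Module.finrank ℝ W = X.rank := by
    have := Submodule.finrank_add_eq_of_isCompl hW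
    have := LinearMap.finrank_range_add_finrank_ker X.mulVecLin
    rw [Matrix.rank]; omega
  -- `X` is injective on `W`, hence antilipschitz there for the Euclidean norm.
  let e := WithLp.linearEquiv 2 ℝ (Fin n → ℝ)
  let f := (Matrix.toLpLin 2 2 X :
    EuclideanSpace ℝ (Fin n) →ₗ[ℝ] EuclideanSpace ℝ (Fin m)).domRestrict (W.comap e.toLinearMap)
  have hker : LinearMap.ker f = ⊥ := by
    refine LinearMap.ker_eq_bot'.mpr fun x hx => ?_
    have hmem : e x.1 ∈ LinearMap.ker X.mulVecLin ⊓ W :=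
      ⟨by simpa [f, e] using congrArg WithLp.ofLp hx, x.2⟩
    rw [hW.inf_eq_bot, Submodule.mem_bot] at hmem
    exact Subtype.ext (e.injective (by simpa using hmem))
  obtain ⟨K, hK, hanti⟩ := f.exists_antilipschitzWith hker
  have hK' : (0 : ℝ) < K := hK
  refine lt_of_lt_of_le (inv_pos.mpr hK') (le_sval h (inv_pos.mpr hK').le W hWrank fun v hv => ?_)
  have := ZeroHomClass.bound_of_antilipschitz f hanti ⟨WithLp.toLp 2 v, hv⟩
  rw [inv_mul_le_iff₀ hK']
  simpa [vnorm_eq_norm, f] using this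

end rank

section orthonormal
variable {m k : ℕ} {U : Matrix (Fin m) (Fin k) ℝ}

lemma mulVec_dotProduct_mulVec_of_transpose_mul_self (hUU : Uᵀ * U = 1) (x y : Fin k → ℝ) :
    U *ᵥ x ⬝ᵥ U *ᵥ y = x ⬝ᵥ y := by
  rw [dotProduct_mulVec, ← mulVec_transpose, mulVec_mulVec, hUU, one_mulVec]

lemma vnorm_mulVec_of_transpose_mul_self (hUU : Uᵀ * U = 1) (c : Fin k → ℝ) :
    vnorm (U *ᵥ c) = vnorm c := by
  refine (pow_left_inj₀ (vnorm_nonneg _) (vnorm_nonneg _) two_ne_zero).mp ?_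
  rw [vnorm_sq, vnorm_sq, mulVec_dotProduct_mulVec_of_transpose_mul_self hUU]

lemma injective_mulVecLin_of_transpose_mul_self (hUU : Uᵀ * U = 1) :
    Function.Injective U.mulVecLin := fun a b hab => by
  simpa [mulVec_mulVec, hUU] using congrArg (Uᵀ *ᵥ ·) hab

lemma finrank_range_mulVecLin_of_transpose_mul_self (hUU : Uᵀ * U = 1) :
    Module.finrank ℝ (LinearMap.range U.mulVecLin) = k := by
  rw [LinearMap.finrank_range_of_inj (injective_mulVecLin_of_transpose_mul_self hUU),
    Module.finrank_fin_fun]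

lemma vnorm_sub_proj_sq_add (hUU : Uᵀ * U = 1) (x : Fin m → ℝ) :
    vnorm (x - (U * Uᵀ) *ᵥ x) ^ 2 + vnorm (Uᵀ *ᵥ x) ^ 2 = vnorm x ^ 2 := by
  have hcross : x ⬝ᵥ U *ᵥ (Uᵀ *ᵥ x) = (Uᵀ *ᵥ x) ⬝ᵥ (Uᵀ *ᵥ x) := by
    rw [dotProduct_mulVec, ← mulVec_transpose, dotProduct_comm]
  have hproj := mulVec_dotProduct_mulVec_of_transpose_mul_self hUU (Uᵀ *ᵥ x) (Uᵀ *ᵥ x)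
  rw [← mulVec_mulVec, vnorm_sq, vnorm_sq, vnorm_sq, sub_dotProduct, dotProduct_sub,
    dotProduct_sub, hproj, dotProduct_comm (U *ᵥ _) x, hcross]
  ring

end orthonormal

def BoundedBelowBy {m n : ℕ} (A : Matrix (Fin m) (Fin n) ℝ) (c : ℝ) : Prop :=
  ∀ v, c * vnorm v ≤ vnorm (A *ᵥ v)

namespace BoundedBelowBy
variable {m n k : ℕ}

lemma le_sval {A : Matrix (Fin m) (Fin n) ℝ} {c : ℝ} (h : BoundedBelowBy A c) (hn : 0 < n)
    (hc : 0 ≤ c) : c ≤ sval A n :=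
  _root_.le_sval hn hc ⊤ (by simp) fun v _ => h v

lemma mul {A : Matrix (Fin m) (Fin n) ℝ} {B : Matrix (Fin n) (Fin k) ℝ} {a b : ℝ}
    (hA : BoundedBelowBy A a) (hB : BoundedBelowBy B b) (ha : 0 ≤ a) :
    BoundedBelowBy (A * B) (a * b) := fun v =>
  calc a * b * vnorm v ≤ a * vnorm (B *ᵥ v) := by
        rw [mul_assoc]; exact mul_le_mul_of_nonneg_left (hB v) ha
    _ ≤ vnorm ((A * B) *ᵥ v) := by rw [← mulVec_mulVec]; exact hA _

/-- For a square matrix, a lower bound `c` bounds `B⁻¹` by `c⁻¹`, hence `(B⁻¹)ᵀ` too, and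
so transfers to `Bᵀ`. -/
lemma transpose {B : Matrix (Fin k) (Fin k) ℝ} {c : ℝ} (h : BoundedBelowBy B c) (hc : 0 < c) :
    BoundedBelowBy Bᵀ c := by
  have hinj : Function.Injective B.mulVec := fun a b hab => by
    have := h (a - b)
    rw [mulVec_sub, hab, sub_self, vnorm_zero] at this
    by_contra hne
    exact (mul_pos hc (vnorm_pos (sub_ne_zero.mpr hne))).not_ge this
  have hdet : IsUnit B.det :=
    (isUnit_iff_isUnit_det B).mp (mulVec_injective_iff_isUnit.mp hinj)
  have hinv : sval B⁻¹ 1 ≤ c⁻¹ := sval_one_le (inv_nonneg.mpr hc.le) fun v => by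
    rw [le_inv_mul_iff₀ hc]
    simpa [mulVec_mulVec, mul_nonsing_inv B hdet] using h (B⁻¹ *ᵥ v)
  intro w
  have hw : (B⁻¹)ᵀ *ᵥ (Bᵀ *ᵥ w) = w := by
    rw [mulVec_mulVec, ← transpose_mul, mul_nonsing_inv B hdet, transpose_one, one_mulVec]
  have := vnorm_transpose_mulVec_le_sval_one B⁻¹ (Bᵀ *ᵥ w)
  rw [hw] at this
  calc c * vnorm w ≤ c * (c⁻¹ * vnorm (Bᵀ *ᵥ w)) :=
        mul_le_mul_of_nonneg_left (this.trans (mul_le_mul_of_nonneg_right hinv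
          (vnorm_nonneg _))) hc.le
    _ = vnorm (Bᵀ *ᵥ w) := by field_simp

end BoundedBelowBy

section topSingular
variable {m n k : ℕ} {A : Matrix (Fin m) (Fin n) ℝ} {U : Matrix (Fin m) (Fin k) ℝ}

lemma vnorm_transpose_mulVec_sq {D : Fin k → ℝ} (hUU : Uᵀ * U = 1)
    (hD : A * Aᵀ * U = U * diagonal D) (c : Fin k → ℝ) :
    vnorm (Aᵀ *ᵥ (U *ᵥ c)) ^ 2 = ∑ i, D i * c i ^ 2 := by
  rw [vnorm_sq, dotProduct_mulVec, vecMul_transpose, mulVec_mulVec, mulVec_mulVec, hD,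
    ← mulVec_mulVec, dotProduct_comm, mulVec_dotProduct_mulVec_of_transpose_mul_self hUU]
  simp only [dotProduct, mulVec_diagonal]
  exact Finset.sum_congr rfl fun i _ => by ring

namespace IsTopSingular

lemma mul_vnorm_le (hU : IsTopSingular A U) (c : Fin k → ℝ) :
    sval A k * vnorm (U *ᵥ c) ≤ vnorm (Aᵀ *ᵥ (U *ᵥ c)) := by
  obtain ⟨hUU, D, hD, hDσ⟩ := hU
  refine (pow_le_pow_iff_left₀ (mul_nonneg (sval_nonneg A k) (vnorm_nonneg _))
    (vnorm_nonneg _) two_ne_zero).mp ?_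
  rw [vnorm_transpose_mulVec_sq hUU hD, mul_pow, vnorm_mulVec_of_transpose_mul_self hUU,
    vnorm_sq_eq_sum, Finset.mul_sum]
  exact Finset.sum_le_sum fun i _ => mul_le_mul_of_nonneg_right (hDσ i) (sq_nonneg _)

lemma sval_le_sval_transpose (hk : 0 < k) (hU : IsTopSingular A U) : sval A k ≤ sval Aᵀ k :=
  le_sval hk (sval_nonneg A k) _ (finrank_range_mulVecLin_of_transpose_mul_self hU.1) <| by
    rintro _ ⟨c, rfl⟩
    exact hU.mul_vnorm_le c

lemma sval_transpose {V : Matrix (Fin n) (Fin k) ℝ} (hk : 0 < k) (hU : IsTopSingular A U)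
    (hV : IsTopSingular Aᵀ V) : sval Aᵀ k = sval A k :=
  le_antisymm (by simpa using hV.sval_le_sval_transpose hk) (hU.sval_le_sval_transpose hk)

/-- Positive eigenvalues put the columns of `U` into the column space of `A`, and the rank
makes the two spaces equal. -/
lemma mul_transpose_mul_eq (hU : IsTopSingular A U) (hrank : A.rank = k)
    (hσ : 0 < sval A k) : U * Uᵀ * A = A := by
  obtain ⟨hUU, D, hD, hDσ⟩ := hU
  have hDpos : ∀ j, D j ≠ 0 := fun j => (lt_of_lt_of_le (pow_pos hσ 2) (hDσ j)).ne'
  have hUA : A * (Aᵀ * U * diagonal D⁻¹) = U := by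
    rw [← Matrix.mul_assoc, ← Matrix.mul_assoc, hD, Matrix.mul_assoc, diagonal_mul_diagonal]
    simp [hDpos]
  have hrange : LinearMap.range U.mulVecLin = LinearMap.range A.mulVecLin := by
    refine Submodule.eq_of_le_of_finrank_le ?_ ?_
    · rintro _ ⟨c, rfl⟩
      exact ⟨(Aᵀ * U * diagonal D⁻¹) *ᵥ c, by
        rw [mulVecLin_apply, mulVec_mulVec, hUA, mulVecLin_apply]⟩
    · rw [finrank_range_mulVecLin_of_transpose_mul_self hUU, ← hrank, Matrix.rank]
  refine ext_iff_mulVec.mpr fun v => ?_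
  obtain ⟨c, hc⟩ : A *ᵥ v ∈ LinearMap.range U.mulVecLin := hrange ▸ ⟨v, rfl⟩
  rw [← mulVec_mulVec, ← hc, mulVecLin_apply, mulVec_mulVec, Matrix.mul_assoc, hUU,
    Matrix.mul_one]

lemma exists_mulVec_eq (hU : IsTopSingular A U) {s : ℝ} (hs : 0 < s) (hsA : s ≤ sval A k)
    (w : Fin k → ℝ) : ∃ v, A *ᵥ v = U *ᵥ w ∧ s * vnorm v ≤ vnorm w := by
  obtain ⟨hUU, D, hD, hDσ⟩ := hU
  have hsD : ∀ j, s ^ 2 ≤ D j := fun j => (pow_le_pow_left₀ hs.le hsA 2).trans (hDσ j)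
  have hDpos : ∀ j, 0 < D j := fun j => (pow_pos hs 2).trans_le (hsD j)
  refine ⟨Aᵀ *ᵥ (U *ᵥ (w / D)), ?_, ?_⟩
  · rw [mulVec_mulVec, mulVec_mulVec, hD, ← mulVec_mulVec]
    congr 1
    funext j
    simp [mulVec_diagonal, mul_div_cancel₀ _ (hDpos j).ne']
  refine (pow_le_pow_iff_left₀ (mul_nonneg hs.le (vnorm_nonneg _)) (vnorm_nonneg _)
    two_ne_zero).mp ?_
  rw [mul_pow, vnorm_transpose_mulVec_sq hUU hD, vnorm_sq_eq_sum, Finset.mul_sum]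
  refine Finset.sum_le_sum fun j _ => ?_
  have hj := hDpos j
  calc s ^ 2 * (D j * (w / D) j ^ 2) = s ^ 2 / D j * w j ^ 2 := by
        simp only [Pi.div_apply]; field_simp
    _ ≤ w j ^ 2 := mul_le_of_le_one_left (sq_nonneg _) ((div_le_one hj).mpr (hsD j))

end IsTopSingular

end topSingular

section perturbation
variable {m n k : ℕ} {A Ah : Matrix (Fin m) (Fin n) ℝ} {U Uh : Matrix (Fin m) (Fin k) ℝ} {s : ℝ}

/-- Wedin's `sin Θ` bound. Writing `Uh w = Ah v` with `‖v‖ ≤ ‖w‖ / s`, the component of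
`Uh w = A v + (Ah - A) v` orthogonal to the column space of `U` comes from `(Ah - A) v` alone. -/
lemma vnorm_sub_proj_mulVec_le (hUU : Uᵀ * U = 1) (hproj : U * Uᵀ * A = A)
    (hUh : IsTopSingular Ah Uh) (hs : 0 < s) (hsAh : s ≤ sval Ah k) (w : Fin k → ℝ) :
    vnorm (Uh *ᵥ w - (U * Uᵀ) *ᵥ (Uh *ᵥ w)) ≤ sval (Ah - A) 1 / s * vnorm w := by
  obtain ⟨v, hv, hvw⟩ := hUh.exists_mulVec_eq hs hsAh w
  set x := (Ah - A) *ᵥ v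
  have hsplit : Uh *ᵥ w - (U * Uᵀ) *ᵥ (Uh *ᵥ w) = x - (U * Uᵀ) *ᵥ x := by
    have hAh : Ah *ᵥ v = A *ᵥ v + x := by simp only [x, sub_mulVec, add_sub_cancel]
    rw [← hv, hAh, mulVec_add, mulVec_mulVec, hproj]
    abel
  have hpyth := vnorm_sub_proj_sq_add hUU x
  calc vnorm (Uh *ᵥ w - (U * Uᵀ) *ᵥ (Uh *ᵥ w)) ≤ vnorm x := by
        rw [hsplit]
        exact (pow_le_pow_iff_left₀ (vnorm_nonneg _) (vnorm_nonneg _) two_ne_zero).mp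
          (by nlinarith [sq_nonneg (vnorm (Uᵀ *ᵥ x))])
    _ ≤ sval (Ah - A) 1 * vnorm v := vnorm_mulVec_le_sval_one _ _
    _ ≤ sval (Ah - A) 1 / s * vnorm w := by
        rw [div_mul_eq_mul_div, le_div_iff₀ hs, mul_assoc]
        exact mul_le_mul_of_nonneg_left ((mul_comm _ _).trans_le hvw) (sval_nonneg _ _)

lemma boundedBelowBy_transpose_mul (hUU : Uᵀ * U = 1) (hproj : U * Uᵀ * A = A)
    (hUh : IsTopSingular Ah Uh) (hs : 0 < s) (hsAh : s ≤ sval Ah k) :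
    BoundedBelowBy (Uᵀ * Uh) √(1 - (sval (Ah - A) 1 / s) ^ 2) := fun w => by
  have hsin := pow_le_pow_left₀ (vnorm_nonneg _)
    (vnorm_sub_proj_mulVec_le hUU hproj hUh hs hsAh w) 2
  have hpyth := vnorm_sub_proj_sq_add hUU (Uh *ᵥ w)
  rw [vnorm_mulVec_of_transpose_mul_self hUh.1] at hpyth
  calc √(1 - (sval (Ah - A) 1 / s) ^ 2) * vnorm w
        = √((1 - (sval (Ah - A) 1 / s) ^ 2) * vnorm w ^ 2) := by
        rw [Real.sqrt_mul' _ (sq_nonneg _), Real.sqrt_sq (vnorm_nonneg w)]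
    _ ≤ √(vnorm (Uᵀ *ᵥ (Uh *ᵥ w)) ^ 2) := Real.sqrt_le_sqrt (by nlinarith)
    _ = vnorm ((Uᵀ * Uh) *ᵥ w) := by rw [Real.sqrt_sq (vnorm_nonneg _), mulVec_mulVec]

lemma boundedBelowBy_transpose_mul_mul {V : Matrix (Fin n) (Fin k) ℝ} (hUU : Uᵀ * U = 1)
    (hproj : U * Uᵀ * A = A) (hV : IsTopSingular Aᵀ V) :
    BoundedBelowBy (Uᵀ * A * V) (sval Aᵀ k) := fun z => by
  have hAVz : A *ᵥ (V *ᵥ z) = U *ᵥ ((Uᵀ * A * V) *ᵥ z) := by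
    simp only [mulVec_mulVec, ← Matrix.mul_assoc, hproj]
  rw [← vnorm_mulVec_of_transpose_mul_self hUU ((Uᵀ * A * V) *ᵥ z), ← hAVz,
    ← vnorm_mulVec_of_transpose_mul_self hV.1 z]
  simpa using hV.mul_vnorm_le z

lemma mul_mul_eq_of_proj {l p : ℕ} {V : Matrix (Fin n) (Fin k) ℝ} (hpU : U * Uᵀ * A = A)
    (hpV : V * Vᵀ * Aᵀ = Aᵀ) (B : Matrix (Fin l) (Fin m) ℝ) (C : Matrix (Fin n) (Fin p) ℝ) :
    B * A * C = B * U * (Uᵀ * A * V) * (Vᵀ * C) := by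
  have hpV' : A * (V * Vᵀ) = A := by
    simpa [transpose_mul, Matrix.mul_assoc] using congrArg transpose hpV
  conv_lhs => rw [← hpU, ← hpV']
  simp only [Matrix.mul_assoc]

end perturbation

lemma div_one_sub_sq_lt_one {ε : ℝ} (h0 : 0 ≤ ε) (h : ε < 1 / 2) : (ε / (1 - ε)) ^ 2 < 1 := by
  have hlt : ε / (1 - ε) < 1 := by rw [div_lt_one (by linarith)]; linarith
  nlinarith [div_nonneg h0 (by linarith : 0 ≤ 1 - ε)]

/-- (Singular subspace perturbation, Lemma "matrix-perturb" (1)–(5).)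
Let `X` be a rank-`k` `m×n` real matrix with top-`k` left/right singular subspaces spanned
by the orthonormal columns of `U`, `V`; similarly `Û`, `V̂` for `X̂`.  With
`ε₀ := ‖X̂ − X‖₂ / σ_k(X) < 1/2` and `ε₁ := ε₀/(1−ε₀)`:
`σ_k(X̂) ≥ (1−ε₀)σ_k(X) > 0`, `σ_k(Ûᵀ U) ≥ √(1−ε₁²)`, `σ_k(V̂ᵀ V) ≥ √(1−ε₁²)`, and
`σ_k(Ûᵀ X V̂) ≥ (1−ε₁²)σ_k(X)`. -/
theorem stmt_8 {m n k : ℕ} (hk : 0 < k) (X Xh : Matrix (Fin m) (Fin n) ℝ)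
    (hrank : X.rank = k)
    (U Uh : Matrix (Fin m) (Fin k) ℝ) (V Vh : Matrix (Fin n) (Fin k) ℝ)
    (hU : IsTopSingular X U) (hV : IsTopSingular X.transpose V)
    (hUh : IsTopSingular Xh Uh) (hVh : IsTopSingular Xh.transpose Vh)
    (ε0 ε1 : ℝ)
    (hε0 : ε0 = sval (Xh - X) 1 / sval X k)
    (hε0lt : ε0 < 1 / 2)
    (hε1 : ε1 = ε0 / (1 - ε0)) :
    (1 - ε0) * sval X k ≤ sval Xh k ∧
    0 < (1 - ε0) * sval X k ∧
    Real.sqrt (1 - ε1 ^ 2) ≤ sval (Uh.transpose * U) k ∧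
    Real.sqrt (1 - ε1 ^ 2) ≤ sval (Vh.transpose * V) k ∧
    (1 - ε1 ^ 2) * sval X k ≤ sval (Uh.transpose * X * Vh) k := by
  have hσ : 0 < sval X k := hrank ▸ sval_rank_pos (hrank ▸ hk)
  have hσT : sval Xᵀ k = sval X k := hU.sval_transpose hk hV
  have hE : sval (Xh - X) 1 = ε0 * sval X k := by rw [hε0, div_mul_cancel₀ _ hσ.ne']
  have hε0nonneg : 0 ≤ ε0 := hε0 ▸ div_nonneg (sval_nonneg _ _) hσ.le
  have hs : 0 < (1 - ε0) * sval X k := mul_pos (by linarith) hσ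
  have hweyl : (1 - ε0) * sval X k ≤ sval Xh k := by
    linarith [sval_sub_sval_one_le hk X Xh]
  have hε1E : sval (Xh - X) 1 / ((1 - ε0) * sval X k) = ε1 := by
    rw [hE, hε1]; field_simp
  have hε1sq : 0 < 1 - ε1 ^ 2 := sub_pos.mpr (hε1 ▸ div_one_sub_sq_lt_one hε0nonneg hε0lt)
  have hc : 0 < √(1 - ε1 ^ 2) := Real.sqrt_pos.mpr hε1sq
  have hpU : U * Uᵀ * X = X := hU.mul_transpose_mul_eq hrank hσ
  have hpV : V * Vᵀ * Xᵀ = Xᵀ := hV.mul_transpose_mul_eq (by rwa [rank_transpose]) (hσT ▸ hσ)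
  have hUUh : BoundedBelowBy (Uhᵀ * U) √(1 - ε1 ^ 2) := by
    simpa [hε1E] using (boundedBelowBy_transpose_mul hU.1 hpU hUh hs hweyl).transpose (hε1E ▸ hc)
  have hVVh : BoundedBelowBy (Vᵀ * Vh) √(1 - ε1 ^ 2) := by
    simpa [← transpose_sub, sval_transpose_one, hε1E] using
      boundedBelowBy_transpose_mul hV.1 hpV hVh hs (by rwa [hUh.sval_transpose hk hVh])
  have hVhV : BoundedBelowBy (Vhᵀ * V) √(1 - ε1 ^ 2) := by
    simpa using hVVh.transpose hc
  refine ⟨hweyl, hs, hUUh.le_sval hk hc.le, hVhV.le_sval hk hc.le, ?_⟩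
  rw [mul_mul_eq_of_proj hpU hpV, ← Real.sq_sqrt hε1sq.le, sq, mul_right_comm]
  refine ((hUUh.mul ?_ hc.le).mul hVVh (mul_nonneg hc.le hσ.le)).le_sval hk ?_
  · exact hσT ▸ boundedBelowBy_transpose_mul_mul hU.1 hpU (by simpa using hV)
  · positivity
end
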